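/- Let U ⊆ ℝ^(n+2) be open, (ξ, N) a null frame on U, and Z : U → ℝ^(n+2) a differentiable closed conformal field with factor φ : U → ℝ. Assume Z*(p) ≠ 0 for every p ∈ U and that Z* is a canonical principal direction: there is λ : U → ℝ with A_{Z⊥}(p)(Z*(p)) = λ(p) • Z*(p) for all p ∈ U. Then η(Z* p, Z* p) > 0 for all p, the unit field T := Z*/√(η(Z*, Z*)) is well defined and differentiable, and for every p ∈ U: (1) P_p(D_{T p} T(p)) = 0, i.e. T is a geodesic vector field for the screen connection; and (2) λ(p) = η(fderiv ℝ Z* p (T p), T p) - φ(p). (Flat-Minkowski-ambient form of the paper's corollary on geodesic canonical principal directions and their eigenvalue.) -/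

import Mathlib

/-!
Write `Z* = Z - η(Z, N) ξ - η(Z, ξ) N`. Since `DZ = φ · id` and the screen projection `P` kills
`ξ` and `N`, one gets `P(D_v Z*) = φ P v + A_{Z⊥} v`; so the principal-direction hypothesis says
`P(D_{Z*} Z*) = (φ + λ) Z*`. Screen vectors are `η`-orthogonal to the timelike vector `ξ - N`, hence
spacelike, so `T = Z*/|Z*|` is defined and smooth. Differentiating the normalisation, the radial
term of `D_T T` is exactly `-P(D_{Z*} Z*)/|Z*|²`, whence `P(D_T T) = 0`, and
`η(D_T Z*, T) = η(D_{Z*} Z*, Z*)/|Z*|² = φ + λ`.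
-/

open scoped BigOperators

noncomputable section

/-- Euclidean space `ℝ^m`. -/
abbrev E (m : ℕ) : Type := EuclideanSpace ℝ (Fin m)

/-- The Minkowski bilinear form `η(x,y) = -(x 0)(y 0) + ∑_{i≥1} (x i)(y i)` on `ℝ^(n+2)`. -/
def eta {n : ℕ} (x y : E (n + 2)) : ℝ :=
  (∑ i, x i * y i) - 2 * (x 0 * y 0)

/-- Screen projection `P_p(w) = w - η(w,N)ξ - η(w,ξ)N` determined by the null frame at a point. -/
def sproj {n : ℕ} (xi N w : E (n + 2)) : E (n + 2) :=
  w - eta w N • xi - eta w xi • N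

/-- Screen shape operator `A*_ξ(p)(v) = -P_p(D_v ξ (p))`. -/
def Astar {n : ℕ} (xi N : E (n + 2) → E (n + 2)) (p v : E (n + 2)) : E (n + 2) :=
  -sproj (xi p) (N p) (fderiv ℝ xi p v)

/-- Shape operator `A_N(p)(v) = -P_p(D_v N (p))`. -/
def AN {n : ℕ} (xi N : E (n + 2) → E (n + 2)) (p v : E (n + 2)) : E (n + 2) :=
  -sproj (xi p) (N p) (fderiv ℝ N p v)

/-- Transversal one-form `τ_p(v) = η(D_v N(p), ξ p)`. -/
def tau {n : ℕ} (xi N : E (n + 2) → E (n + 2)) (p v : E (n + 2)) : ℝ :=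
  eta (fderiv ℝ N p v) (xi p)

/-- Screen part `Z*(p) = P_p(Z p)` of a vector field. -/
def Zstar {n : ℕ} (xi N Z : E (n + 2) → E (n + 2)) (p : E (n + 2)) : E (n + 2) :=
  sproj (xi p) (N p) (Z p)

/-- `A_{Z⊥}(p)(v) = η(Z p, N p) • A*_ξ(p)(v) + η(Z p, ξ p) • A_N(p)(v)`. -/
def AZperp {n : ℕ} (xi N Z : E (n + 2) → E (n + 2)) (p v : E (n + 2)) : E (n + 2) :=
  eta (Z p) (N p) • Astar xi N p v + eta (Z p) (xi p) • AN xi N p v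

section Minkowski

variable {n : ℕ}

lemma eta_comm (x y : E (n + 2)) : eta x y = eta y x := by
  simp only [eta, mul_comm]

def etaB : E (n + 2) →L[ℝ] E (n + 2) →L[ℝ] ℝ :=
  innerSL ℝ - (2 : ℝ) • (EuclideanSpace.proj 0 : E (n + 2) →L[ℝ] ℝ).smulRight (EuclideanSpace.proj 0)

lemma etaB_apply (x y : E (n + 2)) : etaB x y = eta x y := by
  simp only [etaB, eta, sub_apply, smul_apply]
  rw [innerSL_apply_apply]
  simp [PiLp.inner_apply, mul_comm]

lemma eta_add_left (x y z : E (n + 2)) : eta (x + y) z = eta x z + eta y z := by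
  simp only [← etaB_apply, map_add, add_apply]

lemma eta_sub_left (x y z : E (n + 2)) : eta (x - y) z = eta x z - eta y z := by
  simp only [← etaB_apply, map_sub, sub_apply]

lemma eta_smul_left (c : ℝ) (x z : E (n + 2)) : eta (c • x) z = c * eta x z := by
  simp only [← etaB_apply, map_smul, smul_apply, smul_eq_mul]

lemma eta_sub_right (x y z : E (n + 2)) : eta z (x - y) = eta z x - eta z y := by
  simp only [← etaB_apply, map_sub]

lemma eta_smul_right (c : ℝ) (x z : E (n + 2)) : eta z (c • x) = c * eta z x := by
  simp only [← etaB_apply, map_smul, smul_eq_mul]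

lemma eta_self_eq_norm_sq {x : E (n + 2)} (hx : x 0 = 0) : eta x x = ‖x‖ ^ 2 := by
  rw [EuclideanSpace.norm_sq_eq]
  simp [eta, hx, sq]

lemma eta_self_pos_of_eta_eq_zero {v f : E (n + 2)} (hf : eta f f < 0) (hvf : eta v f = 0)
    (hv : v ≠ 0) : 0 < eta v v := by
  by_cases hv0 : v 0 = 0
  · rw [eta_self_eq_norm_sq hv0]
    positivity
  have hf0 : f 0 ≠ 0 := fun h => (eta_self_eq_norm_sq h ▸ hf).not_ge (by positivity)
  -- `w = v - c f` has vanishing time coordinate, so `η(v, v) = ‖w‖² - c² η(f, f)`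
  set c := v 0 / f 0
  set w := v - c • f
  have hw0 : w 0 = 0 := by simp [w, c, hf0]
  have hvv : eta v v = eta w w - c ^ 2 * eta f f := by
    simp only [w, eta_sub_left, eta_sub_right, eta_smul_left, eta_smul_right, eta_comm f v, hvf]
    ring
  have hc : c ≠ 0 := div_ne_zero hv0 hf0
  rw [hvv, eta_self_eq_norm_sq hw0]
  nlinarith [sq_pos_of_ne_zero hc, sq_nonneg ‖w‖]

end Minkowski

section Screen

variable {n : ℕ} {xi N : E (n + 2)}

lemma sproj_sub (u v : E (n + 2)) : sproj xi N (u - v) = sproj xi N u - sproj xi N v := by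
  simp only [sproj, eta_sub_left, sub_smul]
  abel

lemma sproj_add (u v : E (n + 2)) : sproj xi N (u + v) = sproj xi N u + sproj xi N v := by
  simp only [sproj, eta_add_left, add_smul]
  abel

lemma sproj_smul (c : ℝ) (u : E (n + 2)) : sproj xi N (c • u) = c • sproj xi N u := by
  simp only [sproj, eta_smul_left, smul_sub, smul_smul]

lemma sproj_xi (hxx : eta xi xi = 0) (hxn : eta xi N = 1) : sproj xi N xi = 0 := by
  simp [sproj, hxx, hxn]

lemma sproj_N (hnn : eta N N = 0) (hxn : eta xi N = 1) : sproj xi N N = 0 := by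
  simp [sproj, hnn, eta_comm N xi, hxn]

lemma eta_sproj_xi (hxx : eta xi xi = 0) (hxn : eta xi N = 1) (u : E (n + 2)) :
    eta (sproj xi N u) xi = 0 := by
  simp only [sproj, eta_sub_left, eta_smul_left, hxx, eta_comm N xi, hxn]
  ring

lemma eta_sproj_N (hnn : eta N N = 0) (hxn : eta xi N = 1) (u : E (n + 2)) :
    eta (sproj xi N u) N = 0 := by
  simp only [sproj, eta_sub_left, eta_smul_left, hnn, hxn]
  ring

lemma sproj_of_eta_eq_zero {w : E (n + 2)} (hwx : eta w xi = 0) (hwn : eta w N = 0) :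
    sproj xi N w = w := by
  simp [sproj, hwx, hwn]

lemma eta_sproj_of_eta_eq_zero {w : E (n + 2)} (hwx : eta w xi = 0) (hwn : eta w N = 0)
    (u : E (n + 2)) : eta (sproj xi N u) w = eta u w := by
  simp only [sproj, eta_sub_left, eta_smul_left, eta_comm xi, eta_comm N, hwx, hwn]
  ring

lemma eta_eq_mul_of_sproj_eq_smul {u w : E (n + 2)} {μ : ℝ} (hwx : eta w xi = 0)
    (hwn : eta w N = 0) (h : sproj xi N u = μ • w) : eta u w = μ * eta w w := by
  rw [← eta_sproj_of_eta_eq_zero hwx hwn, h, eta_smul_left]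

lemma eta_self_pos_of_screen (hxx : eta xi xi = 0) (hnn : eta N N = 0) (hxn : eta xi N = 1)
    {v : E (n + 2)} (hvx : eta v xi = 0) (hvn : eta v N = 0) (hv : v ≠ 0) : 0 < eta v v := by
  -- a screen vector is `η`-orthogonal to the timelike vector `ξ - N`
  refine eta_self_pos_of_eta_eq_zero (f := xi - N) ?_ (by rw [eta_sub_right, hvx, hvn, sub_zero]) hv
  simp only [eta_sub_left, eta_sub_right, hxx, hnn, eta_comm N xi, hxn]
  norm_num

end Screen

section Calculus

open ContinuousLinearMap

variable {n : ℕ} {p : E (n + 2)}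

lemma hasFDerivAt_eta {f g : E (n + 2) → E (n + 2)} {f' g' : E (n + 2) →L[ℝ] E (n + 2)}
    (hf : HasFDerivAt f f' p) (hg : HasFDerivAt g g' p) :
    HasFDerivAt (fun q => eta (f q) (g q)) (etaB.precompR _ (f p) g' + etaB.precompL _ f' (g p)) p := by
  simpa only [etaB_apply] using etaB.hasFDerivAt_of_bilinear hf hg

lemma differentiableAt_eta {f g : E (n + 2) → E (n + 2)} (hf : DifferentiableAt ℝ f p)
    (hg : DifferentiableAt ℝ g p) : DifferentiableAt ℝ (fun q => eta (f q) (g q)) p :=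
  (hasFDerivAt_eta hf.hasFDerivAt hg.hasFDerivAt).differentiableAt

variable {ξ N Z : E (n + 2) → E (n + 2)}

lemma Zstar_eq : Zstar ξ N Z = Z - (fun q => eta (Z q) (N q)) • ξ - (fun q => eta (Z q) (ξ q)) • N :=
  rfl

lemma differentiableAt_Zstar (hξ : DifferentiableAt ℝ ξ p) (hN : DifferentiableAt ℝ N p)
    (hZ : DifferentiableAt ℝ Z p) : DifferentiableAt ℝ (Zstar ξ N Z) p :=
  (hZ.sub ((differentiableAt_eta hZ hN).smul hξ)).sub ((differentiableAt_eta hZ hξ).smul hN)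

lemma sproj_fderiv_Zstar {φ : ℝ} (hξ : DifferentiableAt ℝ ξ p) (hN : DifferentiableAt ℝ N p)
    (hZ : DifferentiableAt ℝ Z p) (hξξ : eta (ξ p) (ξ p) = 0) (hNN : eta (N p) (N p) = 0)
    (hξN : eta (ξ p) (N p) = 1) (hCC : fderiv ℝ Z p = φ • ContinuousLinearMap.id ℝ (E (n + 2)))
    (v : E (n + 2)) :
    sproj (ξ p) (N p) (fderiv ℝ (Zstar ξ N Z) p v) = φ • sproj (ξ p) (N p) v + AZperp ξ N Z p v := by
  have hD := ((hZ.hasFDerivAt.sub ((differentiableAt_eta hZ hN).hasFDerivAt.smul hξ.hasFDerivAt)).sub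
    ((differentiableAt_eta hZ hξ).hasFDerivAt.smul hN.hasFDerivAt)).fderiv
  rw [Zstar_eq, hD, hCC]
  simp only [sub_apply, add_apply, smul_apply, id_apply, smulRight_apply, sproj_sub, sproj_add,
    sproj_smul, sproj_xi hξξ hξN, sproj_N hNN hξN, smul_zero, add_zero, AZperp, Astar, AN, smul_neg]
  abel

end Calculus

section Normalize

open ContinuousLinearMap

variable {n : ℕ} {p : E (n + 2)} {X : E (n + 2) → E (n + 2)}

def etaNormalize (X : E (n + 2) → E (n + 2)) (q : E (n + 2)) : E (n + 2) :=
  (√(eta (X q) (X q)))⁻¹ • X q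

lemma hasFDerivAt_etaNormalize {X' : E (n + 2) →L[ℝ] E (n + 2)} (hX : HasFDerivAt X X' p)
    (hQ : 0 < eta (X p) (X p)) :
    HasFDerivAt (etaNormalize X)
      ((√(eta (X p) (X p)))⁻¹ • X'
        - ((√(eta (X p) (X p)) ^ 3)⁻¹ • (etaB (X p)).comp X').smulRight (X p)) p := by
  have hs : √(eta (X p) (X p)) ≠ 0 := Real.sqrt_ne_zero'.mpr hQ
  have hr := ((hasDerivAt_inv hs).comp_hasFDerivAt p ((hasFDerivAt_eta hX hX).sqrt hQ.ne')).smul hX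
  refine hr.congr_fderiv (ContinuousLinearMap.ext fun v => ?_)
  simp only [sub_apply, add_apply, smul_apply, comp_apply, smulRight_apply, precompR_apply,
    precompL_apply, compL_apply, etaB_apply, eta_comm (X' v), Function.comp_apply, smul_eq_mul]
  field_simp
  module

lemma eta_apply_etaNormalize (L : E (n + 2) →L[ℝ] E (n + 2)) (hQ : 0 ≤ eta (X p) (X p)) :
    eta (L (etaNormalize X p)) (etaNormalize X p) = eta (L (X p)) (X p) / eta (X p) (X p) := by
  simp only [etaNormalize, map_smul, eta_smul_left, eta_smul_right, ← mul_assoc, ← mul_inv,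
    Real.mul_self_sqrt hQ]
  ring

lemma sproj_fderiv_etaNormalize_self {xi N : E (n + 2)} {μ : ℝ} (hX : DifferentiableAt ℝ X p)
    (hQ : 0 < eta (X p) (X p)) (hXξ : eta (X p) xi = 0) (hXN : eta (X p) N = 0)
    (hμ : sproj xi N (fderiv ℝ X p (X p)) = μ • X p) :
    sproj xi N (fderiv ℝ (etaNormalize X) p (etaNormalize X p)) = 0 := by
  have hD := eta_eq_mul_of_sproj_eq_smul hXξ hXN hμ
  have hs : √(eta (X p) (X p)) ^ 2 = eta (X p) (X p) := Real.sq_sqrt hQ.le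
  have hs0 : √(eta (X p) (X p)) ≠ 0 := Real.sqrt_ne_zero'.mpr hQ
  rw [(hasFDerivAt_etaNormalize hX.hasFDerivAt hQ).fderiv]
  simp only [etaNormalize, sub_apply, smul_apply, comp_apply, smulRight_apply, map_smul, etaB_apply,
    eta_comm (X p), hD, sproj_sub, sproj_smul, hμ, sproj_of_eta_eq_zero hXξ hXN, smul_smul,
    smul_eq_mul, ← sub_smul]
  refine smul_eq_zero_of_left ?_ _
  field_simp
  rw [hs]
  ring

end Normalize

theorem canonical_principal_direction_geodesic_general {n : ℕ}
    (U : Set (E (n + 2)))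
    (ξ N Z T : E (n + 2) → E (n + 2)) (φ lam : E (n + 2) → ℝ)
    (hξd : ∀ p ∈ U, DifferentiableAt ℝ ξ p)
    (hNd : ∀ p ∈ U, DifferentiableAt ℝ N p)
    (hZd : ∀ p ∈ U, DifferentiableAt ℝ Z p)
    (hξξ : ∀ p ∈ U, eta (ξ p) (ξ p) = 0)
    (hNN : ∀ p ∈ U, eta (N p) (N p) = 0)
    (hξN : ∀ p ∈ U, eta (ξ p) (N p) = 1)
    (hCC : ∀ p ∈ U, fderiv ℝ Z p = φ p • ContinuousLinearMap.id ℝ (E (n + 2)))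
    (hZs0 : ∀ p ∈ U, Zstar ξ N Z p ≠ 0)
    (hpd : ∀ p ∈ U, AZperp ξ N Z p (Zstar ξ N Z p) = lam p • Zstar ξ N Z p)
    (hT : ∀ p, T p = (Real.sqrt (eta (Zstar ξ N Z p) (Zstar ξ N Z p)))⁻¹ • Zstar ξ N Z p) :
    ∀ p ∈ U,
      0 < eta (Zstar ξ N Z p) (Zstar ξ N Z p) ∧
      DifferentiableAt ℝ T p ∧
      sproj (ξ p) (N p) (fderiv ℝ T p (T p)) = 0 ∧
      lam p = eta (fderiv ℝ (Zstar ξ N Z) p (T p)) (T p) - φ p := by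
  intro p hp
  obtain rfl : T = etaNormalize (Zstar ξ N Z) := funext hT
  have hWξ : eta (Zstar ξ N Z p) (ξ p) = 0 := eta_sproj_xi (hξξ p hp) (hξN p hp) _
  have hWN : eta (Zstar ξ N Z p) (N p) = 0 := eta_sproj_N (hNN p hp) (hξN p hp) _
  have hQ : 0 < eta (Zstar ξ N Z p) (Zstar ξ N Z p) :=
    eta_self_pos_of_screen (hξξ p hp) (hNN p hp) (hξN p hp) hWξ hWN (hZs0 p hp)
  have hdiff := differentiableAt_Zstar (hξd p hp) (hNd p hp) (hZd p hp)
  have hprincipal : sproj (ξ p) (N p) (fderiv ℝ (Zstar ξ N Z) p (Zstar ξ N Z p))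
      = (φ p + lam p) • Zstar ξ N Z p := by
    rw [sproj_fderiv_Zstar (hξd p hp) (hNd p hp) (hZd p hp) (hξξ p hp) (hNN p hp) (hξN p hp)
      (hCC p hp), hpd p hp, sproj_of_eta_eq_zero hWξ hWN, add_smul]
  refine ⟨hQ, (hasFDerivAt_etaNormalize hdiff.hasFDerivAt hQ).differentiableAt,
    sproj_fderiv_etaNormalize_self hdiff hQ hWξ hWN hprincipal, ?_⟩
  rw [eta_apply_etaNormalize _ hQ.le, eta_eq_mul_of_sproj_eq_smul hWξ hWN hprincipal,
    mul_div_cancel_right₀ _ hQ.ne']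
  ring

/-- If the screen part of a closed conformal field is a canonical principal
direction of `A_{Z⊥}`, then the unit field `T = Z*/|Z*|` is geodesic for the screen connection
and the eigenvalue is `λ = η(∇_T Z*, T) - φ` (flat Minkowski ambient form). -/
theorem canonical_principal_direction_geodesic {n : ℕ}
    (U : Set (E (n + 2))) (hU : IsOpen U)
    (ξ N Z T : E (n + 2) → E (n + 2)) (φ lam : E (n + 2) → ℝ)
    (hξd : ∀ p ∈ U, DifferentiableAt ℝ ξ p)
    (hNd : ∀ p ∈ U, DifferentiableAt ℝ N p)
    (hZd : ∀ p ∈ U, DifferentiableAt ℝ Z p)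
    (hξξ : ∀ p ∈ U, eta (ξ p) (ξ p) = 0)
    (hNN : ∀ p ∈ U, eta (N p) (N p) = 0)
    (hξN : ∀ p ∈ U, eta (ξ p) (N p) = 1)
    (hCC : ∀ p ∈ U, fderiv ℝ Z p = φ p • ContinuousLinearMap.id ℝ (E (n + 2)))
    (hZs0 : ∀ p ∈ U, Zstar ξ N Z p ≠ 0)
    (hpd : ∀ p ∈ U, AZperp ξ N Z p (Zstar ξ N Z p) = lam p • Zstar ξ N Z p)
    (hT : ∀ p, T p = (Real.sqrt (eta (Zstar ξ N Z p) (Zstar ξ N Z p)))⁻¹ • Zstar ξ N Z p) :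
    ∀ p ∈ U,
      0 < eta (Zstar ξ N Z p) (Zstar ξ N Z p) ∧
      DifferentiableAt ℝ T p ∧
      sproj (ξ p) (N p) (fderiv ℝ T p (T p)) = 0 ∧
      lam p = eta (fderiv ℝ (Zstar ξ N Z) p (T p)) (T p) - φ p :=
  canonical_principal_direction_geodesic_general U ξ N Z T φ lam hξd hNd hZd hξξ hNN hξN hCC hZs0
    hpd hT

end
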